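/- Let A and B be finite-dimensional k-algebras, M an A-B-bimodule and N a B-A-bimodule such that the regular A-A-bimodule A is isomorphic to a direct summand of M ⊗_B N. Then: (i) the left A-module M is faithful (its annihilator in A is zero), and every indecomposable left A-module which is both projective and injective is isomorphic to a direct summand of M as a left A-module; (ii) the right A-module N is faithful, and every indecomposable right A-module which is both projective and injective is isomorphic to a direct summand of N as a right A-module. -/

import Mathlib

/-!
A bimodule retraction `p : M ⊗_B N → A` sends some finite sum `∑ mₛ ⊗ nₛ` to `1`, so
`v ↦ ∑ p (vₛ ⊗ nₛ)` is a surjection of left `A`-modules from a finite power of `M` onto `A`;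
an element of `A` killing `M` is therefore zero. It also makes every finitely generated
projective `P` a retract of a finite power of `M`. For indecomposable `P` of finite length,
`End P` is local by Fitting's lemma, so one of the summands `P → M → P` of the identity is
invertible and `P` is a retract of `M`. The same argument with `m ⊗ -` handles `N`.
-/

open scoped TensorProduct
open MulOpposite

universe u

namespace JJ

noncomputable section

section BalTensor

variable (B : Type u) [Ring B] (M : Type u) [AddCommGroup M] [Module Bᵐᵒᵖ M]
  (N : Type u) [AddCommGroup N] [Module B N]

/-- The subgroup of relations defining the balanced tensor product `M ⊗_B N`. -/
def balRel : Submodule ℤ (TensorProduct ℤ M N) :=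
  Submodule.span ℤ { z | ∃ (b : B) (m : M) (n : N),
    z = (op b • m) ⊗ₜ[ℤ] n - m ⊗ₜ[ℤ] (b • n) }

/-- The balanced tensor product `M ⊗_B N` of a right `B`-module `M` and a left `B`-module `N`. -/
def BalTensor : Type u := TensorProduct ℤ M N ⧸ balRel B M N

instance : AddCommGroup (BalTensor B M N) :=
  inferInstanceAs (AddCommGroup (TensorProduct ℤ M N ⧸ balRel B M N))

/-- The canonical projection onto the balanced tensor product. -/
def BalTensor.mk : TensorProduct ℤ M N →+ BalTensor B M N :=
  (balRel B M N).mkQ.toAddMonoidHom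

/-- The image of a pure tensor in the balanced tensor product. -/
def BalTensor.tmul (m : M) (n : N) : BalTensor B M N := BalTensor.mk B M N (m ⊗ₜ n)

lemma BalTensor.mk_surjective : Function.Surjective (BalTensor.mk B M N) :=
  Submodule.mkQ_surjective _

lemma BalTensor.balance (b : B) (m : M) (n : N) :
    BalTensor.tmul B M N (op b • m) n = BalTensor.tmul B M N m (b • n) := by
  have h : ((op b • m) ⊗ₜ[ℤ] n - m ⊗ₜ[ℤ] (b • n)) ∈ balRel B M N :=
    Submodule.subset_span ⟨b, m, n, rfl⟩
  have h2 := (Submodule.Quotient.mk_eq_zero (balRel B M N)).2 h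
  rw [Submodule.Quotient.mk_sub] at h2
  exact sub_eq_zero.1 h2

end BalTensor

section LeftAction

variable (B : Type u) [Ring B] (M : Type u) [AddCommGroup M] [Module Bᵐᵒᵖ M]
  (N : Type u) [AddCommGroup N] [Module B N]
  (A : Type u) [Ring A] [Module A M] [SMulCommClass A Bᵐᵒᵖ M]

/-- The left action of `a : A` on the plain tensor product. -/
def lActAux (a : A) : TensorProduct ℤ M N →ₗ[ℤ] TensorProduct ℤ M N :=
  LinearMap.rTensor N (DistribMulAction.toAddMonoidHom M a).toIntLinearMap

lemma lActAux_tmul (a : A) (m : M) (n : N) :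
    lActAux M N A a (m ⊗ₜ n) = (a • m) ⊗ₜ n := by
  rfl

lemma lActAux_rel (a : A) :
    balRel B M N ≤ (balRel B M N).comap (lActAux M N A a) := by
  rw [balRel, Submodule.span_le]
  rintro z ⟨b, m, n, rfl⟩
  simp only [SetLike.mem_coe, Submodule.mem_comap, map_sub, lActAux_tmul]
  rw [smul_comm a (op b) m]
  exact Submodule.subset_span ⟨b, a • m, n, rfl⟩

/-- The left action of `A` on the balanced tensor product. -/
def lAct (a : A) : BalTensor B M N →ₗ[ℤ] BalTensor B M N :=
  Submodule.mapQ _ _ (lActAux M N A a) (lActAux_rel B M N A a)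

instance : SMul A (BalTensor B M N) := ⟨fun a x => lAct B M N A a x⟩

lemma BalTensor.lsmul_mk (a : A) (x : TensorProduct ℤ M N) :
    a • (BalTensor.mk B M N x) = BalTensor.mk B M N (lActAux M N A a x) := rfl

lemma BalTensor.lsmul_tmul (a : A) (m : M) (n : N) :
    a • (BalTensor.tmul B M N m n) = BalTensor.tmul B M N (a • m) n := by
  rw [BalTensor.tmul, BalTensor.lsmul_mk, lActAux_tmul]
  rfl

instance BalTensor.instLeftModule : Module A (BalTensor B M N) where
  one_smul x := by
    obtain ⟨y, rfl⟩ := BalTensor.mk_surjective B M N x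
    rw [BalTensor.lsmul_mk]
    congr 1
    have h : lActAux M N A (1 : A) = LinearMap.id :=
      TensorProduct.ext' fun m n => by
        show lActAux M N A 1 (m ⊗ₜ n) = LinearMap.id (m ⊗ₜ n)
        rw [lActAux_tmul, one_smul]; rfl
    rw [h]; rfl
  mul_smul a b x := by
    obtain ⟨y, rfl⟩ := BalTensor.mk_surjective B M N x
    rw [BalTensor.lsmul_mk, BalTensor.lsmul_mk, BalTensor.lsmul_mk]
    congr 1
    have h : lActAux M N A (a * b) = (lActAux M N A a).comp (lActAux M N A b) :=
      TensorProduct.ext' fun m n => by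
        show lActAux M N A (a * b) (m ⊗ₜ n) = (lActAux M N A a).comp (lActAux M N A b) (m ⊗ₜ n)
        simp only [LinearMap.comp_apply, lActAux_tmul, mul_smul]
    rw [h]; rfl
  smul_zero a := map_zero (lAct B M N A a)
  smul_add a x y := map_add (lAct B M N A a) x y
  add_smul a b x := by
    obtain ⟨y, rfl⟩ := BalTensor.mk_surjective B M N x
    rw [BalTensor.lsmul_mk, BalTensor.lsmul_mk, BalTensor.lsmul_mk, ← map_add]
    congr 1
    have h : lActAux M N A (a + b) = lActAux M N A a + lActAux M N A b :=
      TensorProduct.ext' fun m n => by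
        show lActAux M N A (a + b) (m ⊗ₜ n) = (lActAux M N A a + lActAux M N A b) (m ⊗ₜ n)
        simp only [LinearMap.add_apply, lActAux_tmul, add_smul, TensorProduct.add_tmul]
    rw [h]; rfl
  zero_smul x := by
    obtain ⟨y, rfl⟩ := BalTensor.mk_surjective B M N x
    rw [BalTensor.lsmul_mk]
    have h : lActAux M N A (0 : A) = 0 :=
      TensorProduct.ext' fun m n => by
        show lActAux M N A 0 (m ⊗ₜ n) = (0 : TensorProduct ℤ M N →ₗ[ℤ] TensorProduct ℤ M N) (m ⊗ₜ n)
        simp only [lActAux_tmul, zero_smul, TensorProduct.zero_tmul, LinearMap.zero_apply]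
    rw [h]
    simp

end LeftAction

section RightAction

variable (B : Type u) [Ring B] (M : Type u) [AddCommGroup M] [Module Bᵐᵒᵖ M]
  (N : Type u) [AddCommGroup N] [Module B N]
  (C : Type u) [Ring C] [Module Cᵐᵒᵖ N] [SMulCommClass B Cᵐᵒᵖ N]

/-- The right action of `c : Cᵐᵒᵖ` on the plain tensor product. -/
def rActAux (c : Cᵐᵒᵖ) : TensorProduct ℤ M N →ₗ[ℤ] TensorProduct ℤ M N :=
  LinearMap.lTensor M (DistribMulAction.toAddMonoidHom N c).toIntLinearMap

lemma rActAux_tmul (c : Cᵐᵒᵖ) (m : M) (n : N) :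
    rActAux M N C c (m ⊗ₜ n) = m ⊗ₜ (c • n) := by
  rfl

lemma rActAux_rel (c : Cᵐᵒᵖ) :
    balRel B M N ≤ (balRel B M N).comap (rActAux M N C c) := by
  rw [balRel, Submodule.span_le]
  rintro z ⟨b, m, n, rfl⟩
  simp only [SetLike.mem_coe, Submodule.mem_comap, map_sub, rActAux_tmul]
  rw [← smul_comm b c n]
  exact Submodule.subset_span ⟨b, m, c • n, rfl⟩

/-- The right action of `Cᵐᵒᵖ` on the balanced tensor product. -/
def rAct (c : Cᵐᵒᵖ) : BalTensor B M N →ₗ[ℤ] BalTensor B M N :=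
  Submodule.mapQ _ _ (rActAux M N C c) (rActAux_rel B M N C c)

instance : SMul Cᵐᵒᵖ (BalTensor B M N) := ⟨fun c x => rAct B M N C c x⟩

lemma BalTensor.rsmul_mk (c : Cᵐᵒᵖ) (x : TensorProduct ℤ M N) :
    c • (BalTensor.mk B M N x) = BalTensor.mk B M N (rActAux M N C c x) := rfl

lemma BalTensor.rsmul_tmul (c : Cᵐᵒᵖ) (m : M) (n : N) :
    c • (BalTensor.tmul B M N m n) = BalTensor.tmul B M N m (c • n) := by
  rw [BalTensor.tmul, BalTensor.rsmul_mk, rActAux_tmul]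
  rfl

instance BalTensor.instRightModule : Module Cᵐᵒᵖ (BalTensor B M N) where
  one_smul x := by
    obtain ⟨y, rfl⟩ := BalTensor.mk_surjective B M N x
    rw [BalTensor.rsmul_mk]
    congr 1
    have h : rActAux M N C (1 : Cᵐᵒᵖ) = LinearMap.id :=
      TensorProduct.ext' fun m n => by
        show rActAux M N C 1 (m ⊗ₜ n) = LinearMap.id (m ⊗ₜ n)
        rw [rActAux_tmul, one_smul]; rfl
    rw [h]; rfl
  mul_smul a b x := by
    obtain ⟨y, rfl⟩ := BalTensor.mk_surjective B M N x
    rw [BalTensor.rsmul_mk, BalTensor.rsmul_mk, BalTensor.rsmul_mk]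
    congr 1
    have h : rActAux M N C (a * b) = (rActAux M N C a).comp (rActAux M N C b) :=
      TensorProduct.ext' fun m n => by
        show rActAux M N C (a * b) (m ⊗ₜ n) = (rActAux M N C a).comp (rActAux M N C b) (m ⊗ₜ n)
        simp only [LinearMap.comp_apply, rActAux_tmul, mul_smul]
    rw [h]; rfl
  smul_zero c := map_zero (rAct B M N C c)
  smul_add c x y := map_add (rAct B M N C c) x y
  add_smul a b x := by
    obtain ⟨y, rfl⟩ := BalTensor.mk_surjective B M N x
    rw [BalTensor.rsmul_mk, BalTensor.rsmul_mk, BalTensor.rsmul_mk, ← map_add]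
    congr 1
    have h : rActAux M N C (a + b) = rActAux M N C a + rActAux M N C b :=
      TensorProduct.ext' fun m n => by
        show rActAux M N C (a + b) (m ⊗ₜ n) = (rActAux M N C a + rActAux M N C b) (m ⊗ₜ n)
        simp only [LinearMap.add_apply, rActAux_tmul, add_smul, TensorProduct.tmul_add]
    rw [h]; rfl
  zero_smul x := by
    obtain ⟨y, rfl⟩ := BalTensor.mk_surjective B M N x
    rw [BalTensor.rsmul_mk]
    have h : rActAux M N C (0 : Cᵐᵒᵖ) = 0 :=
      TensorProduct.ext' fun m n => by
        show rActAux M N C 0 (m ⊗ₜ n) = (0 : TensorProduct ℤ M N →ₗ[ℤ] TensorProduct ℤ M N) (m ⊗ₜ n)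
        simp only [rActAux_tmul, zero_smul, TensorProduct.tmul_zero, LinearMap.zero_apply]
    rw [h]
    simp

end RightAction

section Comm

variable (B : Type u) [Ring B] (M : Type u) [AddCommGroup M] [Module Bᵐᵒᵖ M]
  (N : Type u) [AddCommGroup N] [Module B N]
  (A : Type u) [Ring A] [Module A M] [SMulCommClass A Bᵐᵒᵖ M]
  (C : Type u) [Ring C] [Module Cᵐᵒᵖ N] [SMulCommClass B Cᵐᵒᵖ N]

instance BalTensor.instSMulCommClass : SMulCommClass A Cᵐᵒᵖ (BalTensor B M N) := by
  constructor
  intro a c x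
  obtain ⟨y, rfl⟩ := BalTensor.mk_surjective B M N x
  rw [BalTensor.rsmul_mk, BalTensor.lsmul_mk, BalTensor.lsmul_mk, BalTensor.rsmul_mk]
  congr 1
  have h : (lActAux M N A a).comp (rActAux M N C c)
      = (rActAux M N C c).comp (lActAux M N A a) :=
    TensorProduct.ext' fun m n => by
      show lActAux M N A a (rActAux M N C c (m ⊗ₜ n)) = rActAux M N C c (lActAux M N A a (m ⊗ₜ n))
      simp only [LinearMap.comp_apply, lActAux_tmul, rActAux_tmul]
  exact DFunLike.congr_fun h y

end Comm

section BimodHom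

variable (A : Type u) [Ring A] (C : Type u) [Ring C]
variable (X : Type u) [AddCommGroup X] [Module A X] [Module Cᵐᵒᵖ X]
variable (Y : Type u) [AddCommGroup Y] [Module A Y] [Module Cᵐᵒᵖ Y]

/-- A map of `(A,C)`-bimodules: additive, left `A`-equivariant and right `C`-equivariant. -/
structure IsBimodHom (f : X → Y) : Prop where
  map_add : ∀ x y, f (x + y) = f x + f y
  map_lsmul : ∀ (a : A) (x : X), f (a • x) = a • f x
  map_rsmul : ∀ (c : Cᵐᵒᵖ) (x : X), f (c • x) = c • f x

/-- `X` is (isomorphic to) a direct summand of `Y` as an `(A,C)`-bimodule,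
i.e. a retract of `Y`. -/
def IsBimodSummand : Prop :=
  ∃ (i : X → Y) (p : Y → X), IsBimodHom A C X Y i ∧ IsBimodHom A C Y X p ∧ ∀ x, p (i x) = x

end BimodHom

section Jorder

variable (k : Type u) [Field k]

/-- A finite-dimensional `(A,B)`-bimodule over `k`, whose two induced `k`-actions agree
with the given one. -/
structure BimodData (A B : Type u) [Ring A] [Ring B] [Algebra k A] [Algebra k B] :
    Type (u + 1) where
  X : Type u
  [acg : AddCommGroup X]
  [modk : Module k X]
  [modl : Module A X]
  [modr : Module Bᵐᵒᵖ X]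
  [scc : SMulCommClass A Bᵐᵒᵖ X]
  [tl : IsScalarTower k A X]
  [tr : IsScalarTower k Bᵐᵒᵖ X]
  [fd : FiniteDimensional k X]

attribute [instance] BimodData.acg BimodData.modk BimodData.modl BimodData.modr BimodData.scc
  BimodData.tl BimodData.tr BimodData.fd

variable (A B : Type u) [Ring A] [Ring B] [Algebra k A] [Algebra k B]

/-- `A ≥_J B`: there are finite-dimensional bimodules `M`, `N` such that the regular
`A`-`A`-bimodule `A` is a direct summand of `M ⊗_B N`. -/
def Jge : Prop :=
  ∃ (M : BimodData k A B) (N : BimodData k B A),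
    IsBimodSummand A A A (BalTensor B M.X N.X)

/-- `A ≤_J B`. -/
def Jle : Prop := Jge k B A

/-- `A ∼_J B`: two-sided equivalence. -/
def Jequiv : Prop := Jge k A B ∧ Jge k B A

/-- `A >_J B`: strict two-sided inequality. -/
def Jgt : Prop := Jge k A B ∧ ¬ Jge k B A

end Jorder


section Stmt4

/-- An indecomposable module: nonzero, and admitting no splitting into
two nonzero complementary submodules. -/
def IsIndecomposableModule (R X : Type u) [Ring R] [AddCommGroup X] [Module R X] : Prop :=
  Nontrivial X ∧ ∀ S T : Submodule R X, IsCompl S T → S = ⊥ ∨ T = ⊥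

namespace IsIndecomposableModule

variable {R P : Type u} [Ring R] [AddCommGroup P] [Module R P]

open Filter in
theorem isUnit_or_isNilpotent [IsArtinian R P] [IsNoetherian R P]
    (hP : IsIndecomposableModule R P) (f : Module.End R P) : IsUnit f ∨ IsNilpotent f := by
  obtain ⟨n, hn⟩ := eventually_atTop.mp f.eventually_isCompl_ker_pow_range_pow
  rcases hP.2 _ _ (hn (n + 1) n.le_succ) with hker | hrange
  · have hinj : Function.Injective f := by
      have := LinearMap.ker_eq_bot.mp hker
      rw [pow_succ, Module.End.mul_eq_comp, LinearMap.coe_comp] at this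
      exact this.of_comp
    exact .inl <|
      (Module.End.isUnit_iff f).mpr (IsArtinian.bijective_of_injective_endomorphism f hinj)
  · exact .inr ⟨n + 1, LinearMap.range_eq_bot.mp hrange⟩

theorem isLocalRing_end [IsArtinian R P] [IsNoetherian R P] (hP : IsIndecomposableModule R P) :
    IsLocalRing (Module.End R P) :=
  haveI := hP.1
  .of_isUnit_or_isUnit_one_sub_self fun f =>
    (hP.isUnit_or_isNilpotent f).imp_right IsNilpotent.isUnit_one_sub

end IsIndecomposableModule

section Retract

variable {R P : Type u} {MM ι : Type*} [Ring R] [AddCommGroup MM] [Module R MM]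
  [AddCommGroup P] [Module R P]

theorem exists_retract_of_retract_pi [IsLocalRing (Module.End R P)] [Fintype ι]
    (s : P →ₗ[R] ι → MM) (q : (ι → MM) →ₗ[R] P) (hqs : q ∘ₗ s = LinearMap.id) :
    ∃ (i : P →ₗ[R] MM) (p : MM →ₗ[R] P), p ∘ₗ i = LinearMap.id := by
  classical
  let e : ι → Module.End R P := fun j =>
    (q ∘ₗ LinearMap.single R (fun _ => MM) j) ∘ₗ (LinearMap.proj j ∘ₗ s)
  have hsum : ∑ j, e j = 1 := by
    ext x
    simp only [e, LinearMap.sum_apply, LinearMap.comp_apply, LinearMap.coe_single,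
      LinearMap.coe_proj, Function.eval, ← map_sum, Finset.univ_sum_single]
    exact LinearMap.congr_fun hqs x
  obtain ⟨j, -, u, hu⟩ := IsLocalRing.exists_of_isUnit_sum (hsum ▸ isUnit_one)
  refine ⟨LinearMap.proj j ∘ₗ s,
    (↑u⁻¹ : Module.End R P) ∘ₗ q ∘ₗ LinearMap.single R (fun _ => MM) j, ?_⟩
  change (↑u⁻¹ : Module.End R P) * e j = 1
  rw [← hu, Units.inv_mul]

theorem exists_surjective_pi_of_apply_eq_one [Module.Finite R P] (f : (ι → MM) →ₗ[R] R)
    {v : ι → MM} (hv : f v = 1) :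
    ∃ (n : ℕ) (q : (Fin n × ι → MM) →ₗ[R] P), Function.Surjective q := by
  obtain ⟨n, g, hg⟩ := Module.Finite.exists_fin' R P
  have hf : Function.Surjective f := fun a => ⟨a • v, by rw [map_smul, hv, smul_eq_mul, mul_one]⟩
  exact ⟨n, g ∘ₗ LinearMap.compLeft f (Fin n) ∘ₗ (LinearEquiv.curry R MM (Fin n) ι).toLinearMap,
    hg.comp (hf.comp_left.comp (LinearEquiv.curry R MM (Fin n) ι).surjective)⟩

theorem exists_retract_of_apply_eq_one [IsArtinianRing R] [IsNoetherianRing R] [Module.Finite R P]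
    [Module.Projective R P] (hP : IsIndecomposableModule R P) [Fintype ι]
    (f : (ι → MM) →ₗ[R] R) {v : ι → MM} (hv : f v = 1) :
    ∃ (i : P →ₗ[R] MM) (p : MM →ₗ[R] P), p ∘ₗ i = LinearMap.id := by
  have := hP.isLocalRing_end
  obtain ⟨n, q, hq⟩ := exists_surjective_pi_of_apply_eq_one (P := P) f hv
  obtain ⟨s, hs⟩ := Module.projective_lifting_property q LinearMap.id hq
  exact exists_retract_of_retract_pi s q hs

theorem eq_zero_of_forall_smul_eq_zero (f : (ι → MM) →ₗ[R] R) {v : ι → MM} (hv : f v = 1)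
    {a : R} (ha : ∀ m : MM, a • m = 0) : a = 0 :=
  calc a = f (a • v) := by rw [map_smul, hv, smul_eq_mul, mul_one]
    _ = 0 := by rw [show a • v = 0 from funext fun i => ha (v i), map_zero]

end Retract

namespace BalTensor

variable (B : Type u) [Ring B] {M N : Type u} [AddCommGroup M] [Module Bᵐᵒᵖ M]
  [AddCommGroup N] [Module B N]

theorem add_tmul (m m' : M) (n : N) :
    tmul B M N (m + m') n = tmul B M N m n + tmul B M N m' n := by
  simp only [tmul, TensorProduct.add_tmul, map_add]

theorem tmul_add (m : M) (n n' : N) :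
    tmul B M N m (n + n') = tmul B M N m n + tmul B M N m n' := by
  simp only [tmul, TensorProduct.tmul_add, map_add]

theorem exists_finset (x : BalTensor B M N) :
    ∃ S : Finset (M × N), x = ∑ j ∈ S, tmul B M N j.1 j.2 := by
  obtain ⟨y, rfl⟩ := mk_surjective B M N x
  obtain ⟨S, rfl⟩ := TensorProduct.exists_finset y
  exact ⟨S, map_sum _ _ _⟩

def tmulLeft (A : Type u) [Ring A] [Module A M] [SMulCommClass A Bᵐᵒᵖ M] (n : N) :
    M →ₗ[A] BalTensor B M N where
  toFun m := tmul B M N m n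
  map_add' m m' := add_tmul B m m' n
  map_smul' a m := (lsmul_tmul B M N A a m n).symm

def tmulRight (C : Type u) [Ring C] [Module Cᵐᵒᵖ N] [SMulCommClass B Cᵐᵒᵖ N] (m : M) :
    N →ₗ[Cᵐᵒᵖ] BalTensor B M N where
  toFun n := tmul B M N m n
  map_add' n n' := tmul_add B m n n'
  map_smul' c n := (rsmul_tmul B M N C c m n).symm

variable {B} {A : Type u} [Ring A] [Module A M] [SMulCommClass A Bᵐᵒᵖ M] [Module Aᵐᵒᵖ N]
  [SMulCommClass B Aᵐᵒᵖ N]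

theorem exists_pi_left_of_isBimodSummand (h : IsBimodSummand A A A (BalTensor B M N)) :
    ∃ (ι : Type u) (_ : Fintype ι) (f : (ι → M) →ₗ[A] A) (v : ι → M), f v = 1 := by
  obtain ⟨i, p, -, hp, hpi⟩ := h
  obtain ⟨S, hS⟩ := exists_finset B (i 1)
  let pL : BalTensor B M N →ₗ[A] A := ⟨⟨p, hp.map_add⟩, hp.map_lsmul⟩
  refine ⟨S, inferInstance, ∑ j : S, pL ∘ₗ tmulLeft B A j.1.2 ∘ₗ LinearMap.proj j,
    fun j => j.1.1, ?_⟩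
  simp only [LinearMap.sum_apply, LinearMap.comp_apply, LinearMap.coe_proj, Function.eval,
    ← map_sum]
  exact (congrArg p ((Finset.sum_coe_sort S _).trans hS.symm)).trans (hpi 1)

theorem exists_pi_right_of_isBimodSummand (h : IsBimodSummand A A A (BalTensor B M N)) :
    ∃ (ι : Type u) (_ : Fintype ι) (f : (ι → N) →ₗ[Aᵐᵒᵖ] Aᵐᵒᵖ) (v : ι → N), f v = 1 := by
  obtain ⟨i, p, -, hp, hpi⟩ := h
  obtain ⟨S, hS⟩ := exists_finset B (i 1)
  let pR : BalTensor B M N →ₗ[Aᵐᵒᵖ] Aᵐᵒᵖ :=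
    ⟨⟨fun x => op (p x), fun x y => by rw [hp.map_add, op_add]⟩,
      fun c x => congrArg op (hp.map_rsmul c x)⟩
  refine ⟨S, inferInstance, ∑ j : S, pR ∘ₗ tmulRight B A j.1.1 ∘ₗ LinearMap.proj j,
    fun j => j.1.2, ?_⟩
  simp only [LinearMap.sum_apply, LinearMap.comp_apply, LinearMap.coe_proj, Function.eval,
    ← map_sum]
  exact congrArg op ((congrArg p ((Finset.sum_coe_sort S _).trans hS.symm)).trans (hpi 1))

end BalTensor

theorem stmt4_general (k A B M N : Type u) [Field k]
    [Ring A] [Algebra k A] [FiniteDimensional k A]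
    [Ring B]
    [AddCommGroup M] [Module A M] [Module Bᵐᵒᵖ M]
    [SMulCommClass A Bᵐᵒᵖ M]
    [AddCommGroup N] [Module B N] [Module Aᵐᵒᵖ N]
    [SMulCommClass B Aᵐᵒᵖ N]
    (h : IsBimodSummand A A A (BalTensor B M N)) :
    ((∀ a : A, (∀ m : M, a • m = 0) → a = 0) ∧
      ∀ (P : Type u) [AddCommGroup P] [Module A P], Module.Finite A P →
        IsIndecomposableModule A P → Module.Projective A P → Module.Injective A P →
        ∃ (ι : P →ₗ[A] M) (π : M →ₗ[A] P), ∀ x, π (ι x) = x) ∧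
    ((∀ a : A, (∀ n : N, MulOpposite.op a • n = 0) → a = 0) ∧
      ∀ (P : Type u) [AddCommGroup P] [Module Aᵐᵒᵖ P], Module.Finite Aᵐᵒᵖ P →
        IsIndecomposableModule Aᵐᵒᵖ P → Module.Projective Aᵐᵒᵖ P → Module.Injective Aᵐᵒᵖ P →
        ∃ (ι : P →ₗ[Aᵐᵒᵖ] N) (π : N →ₗ[Aᵐᵒᵖ] P), ∀ x, π (ι x) = x) := by
  have : IsArtinianRing A := isArtinian_of_tower k inferInstance
  have : IsNoetherianRing A := isNoetherian_of_tower k inferInstance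
  have : IsArtinianRing Aᵐᵒᵖ := isArtinian_of_tower k inferInstance
  have : IsNoetherianRing Aᵐᵒᵖ := isNoetherian_of_tower k inferInstance
  obtain ⟨ι, _, f, v, hv⟩ := BalTensor.exists_pi_left_of_isBimodSummand h
  obtain ⟨κ, _, g, w, hw⟩ := BalTensor.exists_pi_right_of_isBimodSummand h
  refine ⟨⟨fun a => eq_zero_of_forall_smul_eq_zero f hv, ?_⟩,
    ⟨fun a ha => op_injective (eq_zero_of_forall_smul_eq_zero g hw ha), ?_⟩⟩
  · intro P _ _ _ hP _ _
    obtain ⟨i, p, hpi⟩ := exists_retract_of_apply_eq_one hP f hv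
    exact ⟨i, p, LinearMap.congr_fun hpi⟩
  · intro P _ _ _ hP _ _
    obtain ⟨i, p, hpi⟩ := exists_retract_of_apply_eq_one hP g hw
    exact ⟨i, p, LinearMap.congr_fun hpi⟩

/-- If the regular `A`-`A`-bimodule `A` is a direct summand of `M ⊗_B N`,
then the left `A`-module `M` is faithful and every finite-dimensional indecomposable
projective-injective left `A`-module is a direct summand of `M`; similarly for the right
`A`-module `N`. -/
theorem stmt4 (k A B M N : Type u) [Field k]
    [Ring A] [Algebra k A] [FiniteDimensional k A]
    [Ring B] [Algebra k B] [FiniteDimensional k B]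
    [AddCommGroup M] [Module k M] [Module A M] [Module Bᵐᵒᵖ M]
    [SMulCommClass A Bᵐᵒᵖ M] [IsScalarTower k A M] [IsScalarTower k Bᵐᵒᵖ M]
    [FiniteDimensional k M]
    [AddCommGroup N] [Module k N] [Module B N] [Module Aᵐᵒᵖ N]
    [SMulCommClass B Aᵐᵒᵖ N] [IsScalarTower k B N] [IsScalarTower k Aᵐᵒᵖ N]
    [FiniteDimensional k N]
    (h : IsBimodSummand A A A (BalTensor B M N)) :
    ((∀ a : A, (∀ m : M, a • m = 0) → a = 0) ∧
      ∀ (P : Type u) [AddCommGroup P] [Module A P], Module.Finite A P →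
        IsIndecomposableModule A P → Module.Projective A P → Module.Injective A P →
        ∃ (ι : P →ₗ[A] M) (π : M →ₗ[A] P), ∀ x, π (ι x) = x) ∧
    ((∀ a : A, (∀ n : N, MulOpposite.op a • n = 0) → a = 0) ∧
      ∀ (P : Type u) [AddCommGroup P] [Module Aᵐᵒᵖ P], Module.Finite Aᵐᵒᵖ P →
        IsIndecomposableModule Aᵐᵒᵖ P → Module.Projective Aᵐᵒᵖ P → Module.Injective Aᵐᵒᵖ P →
        ∃ (ι : P →ₗ[Aᵐᵒᵖ] N) (π : N →ₗ[Aᵐᵒᵖ] P), ∀ x, π (ι x) = x) :=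
  stmt4_general k A B M N h

end Stmt4

end

end JJ
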